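/- Let p be a prime, let R be a commutative ring of characteristic p, and let ∂ = (∂_n)_{n ∈ ℕ} be a multiplicatively iterative HS-derivation on R. Then for every n ∈ ℕ, the p-fold composition ∂_n^{(p)} equals ∂_n. -/

import Mathlib

open Finset Function

/-- `D` is a Hasse-Schmidt derivation on `R`. -/
def IsHSDeriv {R : Type*} [CommRing R] (D : ℕ → R → R) : Prop :=
  (∀ n x y, D n (x + y) = D n x + D n y) ∧
  (∀ x, D 0 x = x) ∧
  (∀ n x y, D n (x * y) = ∑ ij ∈ HasAntidiagonal.antidiagonal n, D ij.1 x * D ij.2 y)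

/-- The coefficient `n! / ((n-i)!·(n-j)!·(i+j-n)!)` appearing in the multiplicative
iterativity rule. -/
def gmCoeff (i j n : ℕ) : ℕ :=
  n.factorial / ((n - i).factorial * ((n - j).factorial * (i + j - n).factorial))

/-- `D` is a multiplicatively iterative (`G_m`-) HS-derivation. -/
def IsGmIterative {R : Type*} [CommRing R] (D : ℕ → R → R) : Prop :=
  ∀ i j : ℕ, ∀ x, D j (D i x) = ∑ n ∈ Finset.Icc (max i j) (i + j), gmCoeff i j n • D n x

/-!
Write `(D n)^[k] = ∑ⱼ cₖ(j) • D j` with natural coefficients `cₖ(j)`. Thinking of `D n` as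
acting on `xᵐ` by multiplication with `m.choose n`, the binomial transform
`c ↦ (m ↦ ∑ⱼ m.choose j * c j)` turns the iterativity rule into multiplication:
`∑ₙ m.choose n * gmCoeff i j n = m.choose i * m.choose j`. Hence `c_p` transforms to
`m ↦ (m.choose n) ^ p`, which is `m.choose n`, the transform of `c₁ = δₙ`, modulo `p` by Fermat.
The transform is unitriangular, so `c_p ≡ δₙ` modulo `p`.
-/

lemma gmCoeff_eq_choose_mul_choose {i j n : ℕ} (hi : i ≤ n) (hj : j ≤ n) (hn : n ≤ i + j) :
    gmCoeff i j n = n.choose j * j.choose (i + j - n) := by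
  have hnj := Nat.choose_mul_factorial_mul_factorial hj
  have hji := Nat.choose_mul_factorial_mul_factorial (show i + j - n ≤ j by omega)
  rw [show j - (i + j - n) = n - i by omega] at hji
  refine Nat.div_eq_of_eq_mul_left (by positivity) ?_
  calc n.factorial = n.choose j * j.factorial * (n - j).factorial := hnj.symm
    _ = _ := by rw [← hji]; ring

/-- `gmCoeff i j n` in binomial form, extended by zero outside `max i j ≤ n ≤ i + j`. -/
def gmCoeffExt (i j n : ℕ) : ℕ :=
  if n ≤ i + j then n.choose j * j.choose (i + j - n) else 0

lemma gmCoeffExt_eq (i j n : ℕ) :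
    gmCoeffExt i j n = if n ∈ Icc (max i j) (i + j) then gmCoeff i j n else 0 := by
  unfold gmCoeffExt
  by_cases hn : n ≤ i + j
  · by_cases hmax : max i j ≤ n
    · rw [if_pos hn, if_pos (mem_Icc.2 ⟨hmax, hn⟩),
        gmCoeff_eq_choose_mul_choose (le_of_max_le_left hmax) (le_of_max_le_right hmax) hn]
    · rw [if_pos hn, if_neg (fun h ↦ hmax (mem_Icc.1 h).1)]
      rcases lt_or_ge n j with hj | hj
      · rw [Nat.choose_eq_zero_of_lt hj, zero_mul]
      · rw [Nat.choose_eq_zero_of_lt (show j < i + j - n by omega), mul_zero]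
  · rw [if_neg hn, if_neg (fun h ↦ hn (mem_Icc.1 h).2)]

lemma sum_range_choose_mul_gmCoeffExt {i j N : ℕ} (hN : i + j < N) (m : ℕ) :
    ∑ n ∈ range N, m.choose n * gmCoeffExt i j n = m.choose i * m.choose j := by
  have htail : ∑ n ∈ range N, m.choose n * gmCoeffExt i j n
      = ∑ n ∈ range (j + (i + 1)), m.choose n * gmCoeffExt i j n := by
    refine (sum_subset (range_subset_range.2 (by omega)) fun n _ hn ↦ ?_).symm
    rw [gmCoeffExt, if_neg (by rw [mem_range] at hn; omega), mul_zero]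
  have hlow : ∑ n ∈ range j, m.choose n * gmCoeffExt i j n = 0 :=
    sum_eq_zero fun n hn ↦ by
      rw [gmCoeffExt, Nat.choose_eq_zero_of_lt (mem_range.1 hn)]; simp
  have hhigh : ∀ t ∈ range (i + 1), m.choose (j + t) * gmCoeffExt i j (j + t)
      = m.choose j * ((m - j).choose t * j.choose (i - t)) := by
    intro t ht
    rw [gmCoeffExt, if_pos (by rw [mem_range] at ht; omega), ← mul_assoc,
      Nat.choose_mul (Nat.le_add_right j t), show i + j - (j + t) = i - t by omega,
      Nat.add_sub_cancel_left, mul_assoc]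
  have vandermonde : ∑ t ∈ range (i + 1), (m - j).choose t * j.choose (i - t)
      = (m - j + j).choose i := by
    rw [Nat.add_choose_eq, Nat.sum_antidiagonal_eq_sum_range_succ_mk]
  rw [htail, sum_range_add, hlow, zero_add, sum_congr rfl hhigh, ← mul_sum, vandermonde]
  rcases le_or_gt j m with hj | hj
  · rw [Nat.sub_add_cancel hj, mul_comm]
  · simp [Nat.choose_eq_zero_of_lt hj]

lemma sum_range_choose_mul_sum_gmCoeffExt (n N m : ℕ) (c : ℕ → ℕ) :
    ∑ l ∈ range (N + n), m.choose l * ∑ j ∈ range N, c j * gmCoeffExt j n l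
      = m.choose n * ∑ j ∈ range N, m.choose j * c j := by
  simp only [mul_sum]
  rw [sum_comm]
  refine sum_congr rfl fun j hj ↦ ?_
  simp only [← mul_sum, mul_left_comm (m.choose _) (c j)]
  rw [sum_range_choose_mul_gmCoeffExt (show j + n < N + n by rw [mem_range] at hj; omega)]
  ring

/-- `iterCoeff n k j` is the coefficient of `D j` in `(D n)^[k]`; it vanishes for `j > k * n`. -/
def iterCoeff (n : ℕ) : ℕ → ℕ → ℕ
  | 0, l => if l = 0 then 1 else 0
  | k + 1, l => ∑ j ∈ range (k * n + 1), iterCoeff n k j * gmCoeffExt j n l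

lemma sum_range_choose_mul_iterCoeff (n k m : ℕ) :
    ∑ j ∈ range (k * n + 1), m.choose j * iterCoeff n k j = m.choose n ^ k := by
  induction k with
  | zero => simp [iterCoeff]
  | succ k ih =>
    rw [show (k + 1) * n + 1 = k * n + 1 + n by ring]
    simp only [iterCoeff]
    rw [sum_range_choose_mul_sum_gmCoeffExt, ih, pow_succ']

lemma eq_of_sum_range_choose_nsmul_eq {M : Type*} [AddCommGroup M] {N : ℕ} {a b : ℕ → M}
    (h : ∀ m < N, ∑ j ∈ range N, m.choose j • a j = ∑ j ∈ range N, m.choose j • b j) :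
    ∀ j < N, a j = b j := by
  intro j
  induction j using Nat.strong_induction_on with
  | _ j ih =>
    intro hj
    have hsum := sub_eq_zero.2 (h j hj)
    rw [← sum_sub_distrib, sum_eq_single j] at hsum
    · simpa [sub_eq_zero] using hsum
    · intro i _ hij
      rcases lt_or_gt_of_ne hij with hlt | hgt
      · rw [ih i hlt (hlt.trans hj), sub_self]
      · simp [Nat.choose_eq_zero_of_lt hgt]
    · exact fun h' ↦ absurd (mem_range.2 hj) h'

section Iterates

variable {R : Type*} [CommRing R] {D : ℕ → R → R}

lemma IsHSDeriv.map_sum_nsmul (hD : IsHSDeriv D) (n : ℕ) {ι : Type*} (s : Finset ι)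
    (c : ι → ℕ) (f : ι → R) : D n (∑ i ∈ s, c i • f i) = ∑ i ∈ s, c i • D n (f i) := by
  let Dn : R →+ R := AddMonoidHom.mk' (D n) (hD.1 n)
  exact (map_sum Dn _ s).trans (sum_congr rfl fun i _ ↦ map_nsmul Dn (c i) (f i))

lemma IsGmIterative.apply_apply_eq_sum_range (hiter : IsGmIterative D) {i j N : ℕ}
    (hN : i + j < N) (x : R) :
    D j (D i x) = ∑ n ∈ range N, gmCoeffExt i j n • D n x := by
  have hIcc : range N ∩ Icc (max i j) (i + j) = Icc (max i j) (i + j) :=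
    inter_eq_right.2 fun n hn ↦ mem_range.2 (by rw [mem_Icc] at hn; omega)
  simp only [gmCoeffExt_eq, ite_smul, zero_smul]
  rw [sum_ite_mem, hIcc, hiter]

lemma IsGmIterative.apply_sum_nsmul (hiter : IsGmIterative D) (hD : IsHSDeriv D)
    (n N : ℕ) (c : ℕ → ℕ) (x : R) :
    D n (∑ j ∈ range N, c j • D j x)
      = ∑ l ∈ range (N + n), (∑ j ∈ range N, c j * gmCoeffExt j n l) • D l x := by
  rw [hD.map_sum_nsmul]
  simp only [sum_smul, mul_smul]
  rw [sum_comm]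
  refine sum_congr rfl fun j hj ↦ ?_
  rw [hiter.apply_apply_eq_sum_range (show j + n < N + n by rw [mem_range] at hj; omega), smul_sum]

lemma IsGmIterative.iterate_eq_sum_iterCoeff (hiter : IsGmIterative D) (hD : IsHSDeriv D)
    (n k : ℕ) (x : R) :
    (D n)^[k] x = ∑ j ∈ range (k * n + 1), iterCoeff n k j • D j x := by
  induction k with
  | zero => simp [iterCoeff, hD.2.1]
  | succ k ih =>
    rw [iterate_succ_apply', ih, hiter.apply_sum_nsmul hD,
      show (k + 1) * n + 1 = k * n + 1 + n by ring]
    rfl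

end Iterates

/-- For a multiplicatively iterative HS-derivation on a ring of characteristic `p`,
the `p`-fold composition `(D n)^{(p)}` equals `D n` for every `n`. -/
theorem gm_p_fold_eq_self (p : ℕ) (hp : p.Prime)
    (R : Type*) [CommRing R] [CharP R p]
    (D : ℕ → R → R)
    (hD : IsHSDeriv D)
    (hiter : IsGmIterative D) :
    ∀ n : ℕ, ∀ r : R, (D n)^[p] r = D n r := by
  have : Fact p.Prime := ⟨hp⟩
  intro n r
  have hn : n < p * n + 1 := Nat.lt_succ_of_le (Nat.le_mul_of_pos_left n hp.pos)
  have hcoeff : ∀ j < p * n + 1, (iterCoeff n p j : R) = if j = n then 1 else 0 := by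
    refine eq_of_sum_range_choose_nsmul_eq fun m _ ↦ ?_
    have htransform := congrArg (Nat.cast : ℕ → R) (sum_range_choose_mul_iterCoeff n p m)
    push_cast at htransform
    simp only [nsmul_eq_mul, smul_ite, smul_zero, sum_ite_eq', if_pos (mem_range.2 hn), mul_one]
    rw [htransform, ← frobenius_def, map_natCast]
  calc (D n)^[p] r = ∑ j ∈ range (p * n + 1), iterCoeff n p j • D j r :=
        hiter.iterate_eq_sum_iterCoeff hD n p r
    _ = ∑ j ∈ range (p * n + 1), if j = n then D j r else 0 :=
        sum_congr rfl fun j hj ↦ by rw [nsmul_eq_mul, hcoeff j (mem_range.1 hj)]; simp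
    _ = D n r := by rw [sum_ite_eq', if_pos (mem_range.2 hn)]
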